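/- arXiv:1708.04152 — 6 statements merged into one kernel-verified Lean document; each statement's English description precedes it below -/
import Mathlib

section
/- Let u₊ and u₋ be convex functions on ℝⁿ, let Λ ⊂ dom(u) be convex, and suppose there are compact sets Ω̄₊, Ω̄₋ ⊂ ℝⁿ with ∂u₊(Λ) ⊂ Ω̄₊ and ∂u₋(Λ) ⊂ Ω̄₋, which are strongly separated by the hyperplane {xⁿ = a₀} with spacing d₀ > 0 (i.e. every point of Ω̄₋ has n-th coordinate < a₀ − d₀ and every point of Ω̄₊ has n-th coordinate > a₀ + d₀). Set u := max{u₊, u₋}. Then for each x' in the projection Λ' of Λ onto the first n−1 coordinates, there is at most one t with (x', t) ∈ Λ and u₊(x', t) = u₋(x', t); moreover this t is given explicitly by h(x') := (u*_{x'}(a₀+d₀) − u*_{x'}(a₀−d₀))/(2d₀), where u*_{x'} is the Legendre transform of t ↦ u(x', t). -/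
open Set

noncomputable section

/-- The subdifferential of `f : ℝⁿ → ℝ` at `x`. -/
def subdiff {n : ℕ} (f : EuclideanSpace ℝ (Fin n) → ℝ) (x : EuclideanSpace ℝ (Fin n)) :
    Set (EuclideanSpace ℝ (Fin n)) :=
  {p | ∀ y, f x + inner ℝ p (y - x) ≤ f y}

/-- Append a last coordinate `t` to `x' ∈ ℝⁿ`, giving a point of `ℝⁿ⁺¹`. -/
def snocPt {n : ℕ} (x' : EuclideanSpace ℝ (Fin n)) (t : ℝ) :
    EuclideanSpace ℝ (Fin (n + 1)) :=
  (EuclideanSpace.equiv (Fin (n + 1)) ℝ).symm (Fin.snoc (fun i => x' i) t)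

/-- Projection onto the first `n` coordinates. -/
def projPt {n : ℕ} (x : EuclideanSpace ℝ (Fin (n + 1))) : EuclideanSpace ℝ (Fin n) :=
  (EuclideanSpace.equiv (Fin n) ℝ).symm (fun i => x i.castSucc)

/-- The partial Legendre transform, in the last variable, of `u = max {u₊, u₋}`. -/
def Lstar {n : ℕ} (up um : EuclideanSpace ℝ (Fin (n + 1)) → ℝ)
    (x' : EuclideanSpace ℝ (Fin n)) (s : ℝ) : ℝ :=
  sSup (Set.range fun t : ℝ => t * s - max (up (snocPt x' t)) (um (snocPt x' t)))

/-!
Pick subgradients `p ∈ ∂u₊(x', t)` and `q ∈ ∂u₋(x', t)` at a coincidence point. Restricted to the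
vertical line through `x'`, they give supporting lines of `t ↦ u(x', t)` at `t` with slopes
`pₙ > a₀ + d₀` and `qₙ < a₀ - d₀`. Hence `t` maximises `τ ↦ τ s - u(x', τ)` for every slope `s`
between them, so `u*_{x'}(s) = t s - u(x', t)` at both `s = a₀ ± d₀`, and the difference quotient
recovers `t`.
-/

/-- Separate `(x, f x)` from the open strict epigraph. -/
theorem ConvexOn.exists_continuousLinearMap_add_le {E : Type*} [NormedAddCommGroup E]
    [NormedSpace ℝ E] {f : E → ℝ} (hf : ConvexOn ℝ univ f) (hcont : Continuous f) (x : E) :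
    ∃ φ : E →L[ℝ] ℝ, ∀ y, f x + φ (y - x) ≤ f y := by
  have hconv : Convex ℝ {p : E × ℝ | f p.1 < p.2} := by
    simpa using hf.convex_strict_epigraph
  have hopen : IsOpen {p : E × ℝ | f p.1 < p.2} :=
    isOpen_lt (hcont.comp continuous_fst) continuous_snd
  obtain ⟨g, hg⟩ := geometric_hahn_banach_open_point hconv hopen
    (x := (x, f x)) (lt_irrefl (f x))
  have hdec : ∀ y s, g (y, s) = g (y, 0) + s * g (0, 1) := fun y s => by
    rw [← smul_eq_mul, ← map_smul, ← map_add]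
    simp
  set c := g (0, 1)
  have hc : 0 < -c := by
    have := hg (x, f x + 1) (by simp)
    rw [hdec x, hdec x (f x)] at this
    linarith
  refine ⟨(-c)⁻¹ • g.comp (ContinuousLinearMap.inl ℝ E ℝ), fun y => ?_⟩
  refine le_of_forall_gt_imp_ge_of_dense fun s hs => ?_
  have hgy := hg (y, s) hs
  rw [hdec y, hdec x (f x)] at hgy
  have hsub : g (y - x, 0) = g (y, 0) - g (x, 0) := by
    rw [← map_sub, Prod.mk_sub_mk, sub_zero]
  have : (-c)⁻¹ * (g (y, 0) - g (x, 0)) ≤ s - f x := by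
    rw [inv_mul_le_iff₀ hc]
    linarith
  simpa [hsub] using this

theorem subdiff_nonempty {n : ℕ} {f : EuclideanSpace ℝ (Fin n) → ℝ} (hf : ConvexOn ℝ univ f)
    (x : EuclideanSpace ℝ (Fin n)) : (subdiff f x).Nonempty := by
  obtain ⟨φ, hφ⟩ := hf.exists_continuousLinearMap_add_le
    (continuousOn_univ.mp (hf.continuousOn isOpen_univ)) x
  exact ⟨(InnerProductSpace.toDual ℝ _).symm φ, fun y => by
    simpa [InnerProductSpace.toDual_symm_apply] using hφ y⟩

theorem snocPt_sub_snocPt {n : ℕ} (x' : EuclideanSpace ℝ (Fin n)) (t s : ℝ) :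
    snocPt x' t - snocPt x' s = EuclideanSpace.single (Fin.last n) (t - s) := by
  ext i
  induction i using Fin.lastCases <;> simp [snocPt, EuclideanSpace.equiv]

theorem add_mul_le_of_mem_subdiff_snocPt {n : ℕ} {f : EuclideanSpace ℝ (Fin (n + 1)) → ℝ}
    {x' : EuclideanSpace ℝ (Fin n)} {t₀ : ℝ} {p : EuclideanSpace ℝ (Fin (n + 1))}
    (hp : p ∈ subdiff f (snocPt x' t₀)) (t : ℝ) :
    f (snocPt x' t₀) + (t - t₀) * p (Fin.last n) ≤ f (snocPt x' t) := by
  simpa [snocPt_sub_snocPt, EuclideanSpace.inner_single_right] using hp (snocPt x' t)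

theorem isGreatest_range_mul_sub_of_forall_add_mul_le {φ : ℝ → ℝ} {t₀ a b s : ℝ}
    (ha : ∀ t, φ t₀ + (t - t₀) * a ≤ φ t) (hb : ∀ t, φ t₀ + (t - t₀) * b ≤ φ t)
    (has : a ≤ s) (hsb : s ≤ b) :
    IsGreatest (range fun t => t * s - φ t) (t₀ * s - φ t₀) := by
  refine ⟨⟨t₀, rfl⟩, ?_⟩
  rintro _ ⟨t, rfl⟩
  rcases le_total t₀ t with h | h
  · nlinarith [ha t, hb t, mul_le_mul_of_nonneg_left hsb (sub_nonneg.mpr h)]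
  · nlinarith [ha t, hb t, mul_le_mul_of_nonpos_left has (sub_nonpos.mpr h)]

theorem Lstar_eq_of_mem_subdiff {n : ℕ} {up um : EuclideanSpace ℝ (Fin (n + 1)) → ℝ}
    {x' : EuclideanSpace ℝ (Fin n)} {t₀ s : ℝ} {p q : EuclideanSpace ℝ (Fin (n + 1))}
    (hp : p ∈ subdiff up (snocPt x' t₀)) (hq : q ∈ subdiff um (snocPt x' t₀))
    (heq : up (snocPt x' t₀) = um (snocPt x' t₀))
    (hqs : q (Fin.last n) ≤ s) (hsp : s ≤ p (Fin.last n)) :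
    Lstar up um x' s = t₀ * s - up (snocPt x' t₀) := by
  set u : ℝ → ℝ := fun t => max (up (snocPt x' t)) (um (snocPt x' t))
  have hu : u t₀ = up (snocPt x' t₀) := by simp [u, heq]
  have hsupp : ∀ t, u t₀ + (t - t₀) * p (Fin.last n) ≤ u t := fun t =>
    hu ▸ (add_mul_le_of_mem_subdiff_snocPt hp t).trans (le_max_left _ _)
  have hsupm : ∀ t, u t₀ + (t - t₀) * q (Fin.last n) ≤ u t := fun t =>
    hu.trans heq ▸ (add_mul_le_of_mem_subdiff_snocPt hq t).trans (le_max_right _ _)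
  rw [← hu]
  exact (isGreatest_range_mul_sub_of_forall_add_mul_le hsupm hsupp hqs hsp).csSup_eq

theorem explicit_function_uniqueness_general (n : ℕ)
    (up um : EuclideanSpace ℝ (Fin (n + 1)) → ℝ)
    (Λ Ωp Ωm : Set (EuclideanSpace ℝ (Fin (n + 1))))
    (hup : ConvexOn ℝ univ up) (hum : ConvexOn ℝ univ um)
    (hsubp : ∀ x ∈ Λ, subdiff up x ⊆ Ωp) (hsubm : ∀ x ∈ Λ, subdiff um x ⊆ Ωm)
    (a₀ d₀ : ℝ) (hd₀ : 0 < d₀)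
    (hsepm : ∀ p ∈ Ωm, p (Fin.last n) < a₀ - d₀)
    (hsepp : ∀ p ∈ Ωp, a₀ + d₀ < p (Fin.last n)) :
    ∀ (x' : EuclideanSpace ℝ (Fin n)) (t : ℝ),
      snocPt x' t ∈ Λ → up (snocPt x' t) = um (snocPt x' t) →
      t = (Lstar up um x' (a₀ + d₀) - Lstar up um x' (a₀ - d₀)) / (2 * d₀) := by
  intro x' t hmem heq
  obtain ⟨p, hp⟩ := subdiff_nonempty hup (snocPt x' t)
  obtain ⟨q, hq⟩ := subdiff_nonempty hum (snocPt x' t)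
  have hpn := hsepp p (hsubp _ hmem hp)
  have hqn := hsepm q (hsubm _ hmem hq)
  rw [Lstar_eq_of_mem_subdiff hp hq heq (by linarith) (by linarith),
    Lstar_eq_of_mem_subdiff hp hq heq (by linarith) (by linarith)]
  field_simp
  ring

/-- Explicit function theorem, uniqueness part: under strong separation of the subdifferential
images, on each vertical line the coincidence set of `u₊` and `u₋` within `Λ` consists of at
most one point, given by the explicit partial-Legendre-transform formula. -/
theorem explicit_function_uniqueness (n : ℕ)
    (up um : EuclideanSpace ℝ (Fin (n + 1)) → ℝ)
    (Λ Ωp Ωm : Set (EuclideanSpace ℝ (Fin (n + 1))))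
    (hup : ConvexOn ℝ univ up) (hum : ConvexOn ℝ univ um)
    (hΛ : Convex ℝ Λ) (hΩp : IsCompact Ωp) (hΩm : IsCompact Ωm)
    (hsubp : ∀ x ∈ Λ, subdiff up x ⊆ Ωp) (hsubm : ∀ x ∈ Λ, subdiff um x ⊆ Ωm)
    (a₀ d₀ : ℝ) (hd₀ : 0 < d₀)
    (hsepm : ∀ p ∈ Ωm, p (Fin.last n) < a₀ - d₀)
    (hsepp : ∀ p ∈ Ωp, a₀ + d₀ < p (Fin.last n)) :
    ∀ (x' : EuclideanSpace ℝ (Fin n)) (t : ℝ),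
      snocPt x' t ∈ Λ → up (snocPt x' t) = um (snocPt x' t) →
      t = (Lstar up um x' (a₀ + d₀) - Lstar up um x' (a₀ - d₀)) / (2 * d₀) :=
  explicit_function_uniqueness_general n up um Λ Ωp Ωm hup hum hsubp hsubm a₀ d₀ hd₀ hsepm hsepp

end
end

section
/- Let {Ω̄_i}_{i=1}^{n+1} be an affinely independent collection of path-connected subsets of ℝⁿ, and let u : ℝⁿ → ℝ be a convex function. Then there is at most one point x₀ such that ∂u(x₀) intersects every Ω̄_i, 1 ≤ i ≤ n+1. -/
open Set

noncomputable section

/-!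
If `x ≠ y` both had subdifferentials meeting every `Ω̄ᵢ`, the hyperplane
`⟪y - x, ·⟫ = u y - u x` would separate `∂u(x)` from `∂u(y)`. Each path-connected `Ω̄ᵢ` meets both
sides, hence meets the hyperplane, and the `n + 1` meeting points would be affinely independent
points of a hyperplane of `ℝⁿ`, which is impossible.
-/

theorem LinearMap.eq_zero_of_affineIndependent_of_forall_apply_eq {ι k V : Type*} [Fintype ι]
    [Field k] [AddCommGroup V] [Module k V] [FiniteDimensional k V] {p : ι → V}
    (hp : AffineIndependent k p) (hcard : Fintype.card ι = Module.finrank k V + 1)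
    (ℓ : V →ₗ[k] k) {c : k} (hℓ : ∀ i, ℓ (p i) = c) : ℓ = 0 := by
  have hspan : vectorSpan k (Set.range p) ≤ LinearMap.ker ℓ := by
    rw [vectorSpan_def, Submodule.span_le]
    rintro _ ⟨_, ⟨i, rfl⟩, _, ⟨j, rfl⟩, rfl⟩
    simp [hℓ]
  rwa [hp.vectorSpan_eq_top_of_card_eq_finrank_add_one hcard, top_le_iff,
    LinearMap.ker_eq_top] at hspan

section Subdifferential

variable {n : ℕ} {u : EuclideanSpace ℝ (Fin n) → ℝ} {x y p : EuclideanSpace ℝ (Fin n)}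

theorem inner_sub_le_of_mem_subdiff (hp : p ∈ subdiff u x) :
    inner ℝ (y - x) p ≤ u y - u x := by
  have := hp y
  rw [real_inner_comm] at this
  linarith

theorem exists_mem_inner_sub_eq_of_mem_subdiff {S : Set (EuclideanSpace ℝ (Fin n))}
    (hS : IsPreconnected S) (hx : (subdiff u x ∩ S).Nonempty) (hy : (subdiff u y ∩ S).Nonempty) :
    ∃ r ∈ S, inner ℝ (y - x) r = u y - u x := by
  obtain ⟨p, hpx, hpS⟩ := hx
  obtain ⟨q, hqy, hqS⟩ := hy
  have hq : u y - u x ≤ inner ℝ (y - x) q := by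
    have := inner_sub_le_of_mem_subdiff (y := x) hqy
    rw [← neg_sub, inner_neg_left] at this
    linarith
  exact hS.intermediate_value hpS hqS (continuous_const.inner continuous_id).continuousOn
    ⟨inner_sub_le_of_mem_subdiff hpx, hq⟩

end Subdifferential

theorem unique_max_multiplicity_tear_general (n : ℕ)
    (Ω : Fin (n + 1) → Set (EuclideanSpace ℝ (Fin n)))
    (hpath : ∀ i, IsPathConnected (Ω i))
    (hai : ∀ p : Fin (n + 1) → EuclideanSpace ℝ (Fin n),
      (∀ i, p i ∈ Ω i) → AffineIndependent ℝ p)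
    (u : EuclideanSpace ℝ (Fin n) → ℝ) :
    ∀ x y : EuclideanSpace ℝ (Fin n),
      (∀ i, (subdiff u x ∩ Ω i).Nonempty) → (∀ i, (subdiff u y ∩ Ω i).Nonempty) →
      x = y := by
  intro x y hx hy
  choose r hrΩ hr using fun i ↦
    exists_mem_inner_sub_eq_of_mem_subdiff (hpath i).isConnected.isPreconnected (hx i) (hy i)
  have hzero := LinearMap.eq_zero_of_affineIndependent_of_forall_apply_eq (hai r hrΩ)
    (by simp) (innerₛₗ ℝ (y - x)) hr
  exact (sub_eq_zero.mp (inner_self_eq_zero.mp (LinearMap.congr_fun hzero (y - x)))).symm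

/-- Uniqueness of maximal multiplicity tears: if `{Ω̄ᵢ}_{i=1}^{n+1}` is an affinely
independent collection of path-connected subsets of `ℝⁿ` and `u` is convex, then there is at
most one point whose subdifferential meets every `Ω̄ᵢ`. -/
theorem unique_max_multiplicity_tear (n : ℕ)
    (Ω : Fin (n + 1) → Set (EuclideanSpace ℝ (Fin n)))
    (hpath : ∀ i, IsPathConnected (Ω i))
    (hai : ∀ p : Fin (n + 1) → EuclideanSpace ℝ (Fin n),
      (∀ i, p i ∈ Ω i) → AffineIndependent ℝ p)
    (u : EuclideanSpace ℝ (Fin n) → ℝ) (hu : ConvexOn ℝ univ u) :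
    ∀ x y : EuclideanSpace ℝ (Fin n),
      (∀ i, (subdiff u x ∩ Ω i).Nonempty) → (∀ i, (subdiff u y ∩ Ω i).Nonempty) →
      x = y :=
  unique_max_multiplicity_tear_general n Ω hpath hai u
end
end

section
/- Let u₁, ..., u_K be convex functions on ℝⁿ with ∇u_i(x) ∈ Ω̄_i for a.e. differentiability point x, where {Ω̄_i} are disjoint compact sets, and let u = max_i u_i. Fix indices i₁,...,i_k such that the convex hulls {ch(Ω̄_{i₁}), ..., ch(Ω̄_{i_k})} form an affinely independent collection. Then for any point x₀ in the coincidence set Σ := {x : u_{i₁}(x) = ⋯ = u_{i_k}(x)}, every matrix in the Clarke generalized Jacobian of the map F(x) := (u_{i₁}(x) − u_{i_k}(x), ..., u_{i_{k−1}}(x) − u_{i_k}(x)) at x₀ has rank k − 1. -/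
open Set Filter

noncomputable section

/-- The Clarke generalized Jacobian of `F` at `x₀`: the closed convex hull of all limits of
derivatives of `F` along sequences of differentiability points converging to `x₀`. -/
def clarkeJacobian {n k : ℕ}
    (F : EuclideanSpace ℝ (Fin n) → EuclideanSpace ℝ (Fin k))
    (x₀ : EuclideanSpace ℝ (Fin n)) :
    Set (EuclideanSpace ℝ (Fin n) →L[ℝ] EuclideanSpace ℝ (Fin k)) :=
  closure (convexHull ℝ
    {A | ∃ x : ℕ → EuclideanSpace ℝ (Fin n),
      (∀ m, DifferentiableAt ℝ F (x m)) ∧ Tendsto x atTop (nhds x₀) ∧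
      Tendsto (fun m => fderiv ℝ F (x m)) atTop (nhds A)})

/-!
Write `∂f(x)` for the subdifferential of a convex `f`. Differentiability points of `f` are dense
(Rademacher, as `f` is locally Lipschitz) and limits of gradients are subgradients, so if all
gradients lie in a compact set `Ω` then every point carries a subgradient in `Ω`. By monotonicity
of `∂f`, a subgradient `p ∈ Ω` at `x + v` satisfies `⟪p - q, v⟫ ≥ 0` for every `q ∈ ∂f(x)`, which
rules out a hyperplane with normal `v` separating `q` from `ch Ω`; hence `∂f(x) ⊆ ch Ω`.

At a differentiability point `x` of `F`, pick `q ∈ ∂u_{i_k}(x)`. Along each ray from `x`, convexity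
of `u_{i_j} = F_j + u_{i_k}` turns the first-order lower bound with slope `∇F_j(x) + q` into a
global one, so `∇F_j(x) + q ∈ ∂u_{i_j}(x)`. Hence every `DF(x)` has rows `p_j - p_k` with
`p_j ∈ ch Ω̄_{i_j}`. Such operators form a linear image of a product of convex hulls of compact
sets, which is compact (Carathéodory) and convex, so it contains the Clarke Jacobian; affine
independence of the `p_j` makes each of them surjective.
-/

open Topology RealInnerProductSpace

theorem LocallyLipschitz.dense_setOf_differentiableAt {E F : Type*} [NormedAddCommGroup E]
    [NormedSpace ℝ E] [FiniteDimensional ℝ E] [NormedAddCommGroup F] [NormedSpace ℝ F]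
    [FiniteDimensional ℝ F] {f : E → F} (hf : LocallyLipschitz f) :
    Dense {x | DifferentiableAt ℝ f x} := by
  borelize E
  refine dense_iff_inter_open.mpr fun U hU ⟨x, hxU⟩ => ?_
  obtain ⟨K, t, ht, hK⟩ := hf x
  set V := interior (U ∩ t)
  have hxV : x ∈ V := mem_interior_iff_mem_nhds.mpr (inter_mem (hU.mem_nhds hxU) ht)
  have hV : MeasureTheory.Measure.addHaar V ≠ 0 :=
    (isOpen_interior.measure_pos _ ⟨x, hxV⟩).ne'
  obtain ⟨y, hyV, hy⟩ := MeasureTheory.Measure.exists_mem_of_measure_ne_zero_of_ae hV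
    ((hK.mono (interior_subset.trans inter_subset_right)).ae_differentiableWithinAt
      isOpen_interior.measurableSet)
  exact ⟨y, (interior_subset hyV).1, hy.differentiableAt (isOpen_interior.mem_nhds hyV)⟩

section NormedSpace

variable {E : Type*} [NormedAddCommGroup E] [NormedSpace ℝ E]

theorem convexHull_range_eq_image_stdSimplex {ι : Type*} [Fintype ι] (z : ι → E) :
    convexHull ℝ (range z) = (fun w : ι → ℝ => ∑ i, w i • z i) '' stdSimplex ℝ ι := by
  classical
  change _ = Fintype.linearCombination ℝ z '' _
  rw [← convexHull_basis_eq_stdSimplex, LinearMap.image_convexHull, ← range_comp]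
  congr 2
  ext i
  simp [Fintype.linearCombination_apply, ite_smul]

theorem IsCompact.convexHull [FiniteDimensional ℝ E] {s : Set E} (hs : IsCompact s) :
    IsCompact (_root_.convexHull ℝ s) := by
  set N := Module.finrank ℝ E + 1
  suffices h : _root_.convexHull ℝ s =
      (fun p : (Fin N → ℝ) × (Fin N → E) => ∑ i, p.1 i • p.2 i) ''
        (stdSimplex ℝ (Fin N) ×ˢ univ.pi fun _ => s) by
    rw [h]
    exact ((isCompact_stdSimplex ℝ _).prod (isCompact_univ_pi fun _ => hs)).image
      (by fun_prop)
  refine Subset.antisymm (fun x hx => ?_) ?_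
  · rw [convexHull_eq_union] at hx
    simp only [mem_iUnion] at hx
    obtain ⟨t, hts, hti, hxt⟩ := hx
    have : Nonempty t := by
      obtain ⟨y, hy⟩ := convexHull_nonempty_iff.mp ⟨x, hxt⟩
      exact ⟨⟨y, hy⟩⟩
    have hcard : Fintype.card t ≤ N :=
      hti.card_le_finrank_succ.trans (Nat.add_le_add_right (Submodule.finrank_le _) 1)
    obtain ⟨e⟩ : Nonempty (t ↪ Fin N) :=
      Function.Embedding.nonempty_of_card_le (by simpa using hcard)
    set z : Fin N → E := fun i => ((Function.invFun e i : t) : E)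
    have hz : range z = t := by
      rw [range_comp' Subtype.val (Function.invFun e),
        (Function.invFun_surjective e.injective).range_eq]
      simp
    rw [← hz, convexHull_range_eq_image_stdSimplex] at hxt
    obtain ⟨w, hw, rfl⟩ := hxt
    exact ⟨(w, z), ⟨hw, fun i _ => hts (hz ▸ mem_range_self i)⟩, rfl⟩
  · rintro _ ⟨⟨w, z⟩, ⟨hw, hz⟩, rfl⟩
    have hx : ∑ i, w i • z i ∈ _root_.convexHull ℝ (range z) := by
      rw [convexHull_range_eq_image_stdSimplex]
      exact ⟨w, hw, rfl⟩
    refine convexHull_mono ?_ hx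
    rintro _ ⟨i, rfl⟩
    exact hz i (mem_univ i)

end NormedSpace

variable {E : Type*} [NormedAddCommGroup E] [InnerProductSpace ℝ E]

def subdifferential (f : E → ℝ) (x : E) : Set E :=
  {q | ∀ y, f x + ⟪q, y - x⟫ ≤ f y}

theorem inner_sub_nonneg_of_mem_subdifferential {f : E → ℝ} {x y q p : E}
    (hq : q ∈ subdifferential f x) (hp : p ∈ subdifferential f y) :
    0 ≤ ⟪p - q, y - x⟫ := by
  have h₁ := hq y
  have h₂ := hp x
  rw [← neg_sub y x, inner_neg_right] at h₂
  rw [inner_sub_left]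
  linarith

theorem mem_subdifferential_of_tendsto {ι : Type*} {l : Filter ι} [l.NeBot] {f : E → ℝ}
    (hf : Continuous f) {y : ι → E} {q : ι → E} {x p : E} (hy : Tendsto y l (𝓝 x))
    (hq : Tendsto q l (𝓝 p)) (hmem : ∀ᶠ i in l, q i ∈ subdifferential f (y i)) :
    p ∈ subdifferential f x := fun z =>
  le_of_tendsto (((hf.tendsto x).comp hy).add (hq.inner (tendsto_const_nhds.sub hy)))
    (hmem.mono fun _ hi => hi z)

theorem ConvexOn.add_mem_subdifferential [CompleteSpace E] {f g : E → ℝ} {x q r : E}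
    (hf : ConvexOn ℝ univ f) (hq : q ∈ subdifferential g x) (hr : HasGradientAt (f - g) r x) :
    r + q ∈ subdifferential f x := by
  intro y
  set v := y - x
  have hline : Tendsto (slope (fun s : ℝ => (f - g) (x + s • v)) 0) (𝓝[>] 0) (𝓝 ⟪r, v⟫) :=
    (hasDerivAt_iff_tendsto_slope.mp
      ((hasGradientAt_iff_hasFDerivAt.mp hr).hasLineDerivAt v)).mono_left
      (nhdsWithin_mono _ fun _ ht => ne_of_gt ht)
  have hbound : ∀ t ∈ Ioc (0 : ℝ) 1,
      slope (fun s : ℝ => (f - g) (x + s • v)) 0 t ≤ f y - f x - ⟪q, v⟫ := by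
    rintro t ⟨ht₀, ht₁⟩
    have hconv : f (x + t • v) ≤ (1 - t) * f x + t * f y := by
      have : x + t • v = (1 - t) • x + t • y := by
        simp only [v, smul_sub, sub_smul, one_smul]; abel
      rw [this]
      exact hf.2 trivial trivial (by linarith) ht₀.le (by ring)
    have hg := hq (x + t • v)
    rw [add_sub_cancel_left, real_inner_smul_right] at hg
    rw [slope_def_field, div_le_iff₀ (by simpa using ht₀)]
    simp only [Pi.sub_apply, zero_smul, add_zero, sub_zero]
    nlinarith
  have := le_of_tendsto hline (eventually_of_mem (Ioc_mem_nhdsGT one_pos) hbound)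
  rw [inner_add_left]
  linarith

theorem ConvexOn.gradient_mem_subdifferential [CompleteSpace E] {f : E → ℝ} {x : E}
    (hf : ConvexOn ℝ univ f) (hd : DifferentiableAt ℝ f x) :
    gradient f x ∈ subdifferential f x := by
  have h0 : (0 : E) ∈ subdifferential (0 : E → ℝ) x := fun y => by simp
  simpa using hf.add_mem_subdifferential h0 (by simpa using hd.hasGradientAt)

section FiniteDimensional

variable [FiniteDimensional ℝ E] {f : E → ℝ} {Ω : Set E}

theorem ConvexOn.exists_mem_inter_subdifferential (hf : ConvexOn ℝ univ f) (hΩ : IsCompact Ω)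
    (hgrad : ∀ x, DifferentiableAt ℝ f x → gradient f x ∈ Ω) (x : E) :
    (Ω ∩ subdifferential f x).Nonempty := by
  obtain ⟨y, hyd, hyx⟩ := mem_closure_iff_seq_limit.mp
    (hf.locallyLipschitz.dense_setOf_differentiableAt x)
  obtain ⟨p, hpΩ, φ, hφ, hp⟩ := hΩ.tendsto_subseq fun m => hgrad _ (hyd m)
  exact ⟨p, hpΩ, mem_subdifferential_of_tendsto hf.locallyLipschitz.continuous
    (hyx.comp hφ.tendsto_atTop) hp
    (Eventually.of_forall fun m => hf.gradient_mem_subdifferential (hyd (φ m)))⟩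

theorem ConvexOn.subdifferential_subset_convexHull (hf : ConvexOn ℝ univ f) (hΩ : IsCompact Ω)
    (hgrad : ∀ x, DifferentiableAt ℝ f x → gradient f x ∈ Ω) (x : E) :
    subdifferential f x ⊆ convexHull ℝ Ω := by
  intro q hq
  by_contra hq'
  obtain ⟨ℓ, c, hΩc, hcq⟩ :=
    geometric_hahn_banach_closed_point (convex_convexHull ℝ Ω) hΩ.convexHull.isClosed hq'
  set v := (InnerProductSpace.toDual ℝ E).symm ℓ
  have hℓ : ∀ z, ℓ z = ⟪v, z⟫ := fun z => (InnerProductSpace.toDual_symm_apply).symm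
  obtain ⟨p, hpΩ, hp⟩ := hf.exists_mem_inter_subdifferential hΩ hgrad (x + v)
  have hmono := inner_sub_nonneg_of_mem_subdifferential hq hp
  have hpc := hΩc p (subset_convexHull ℝ Ω hpΩ)
  rw [add_sub_cancel_left, inner_sub_left, real_inner_comm, real_inner_comm v] at hmono
  rw [hℓ] at hpc hcq
  linarith

end FiniteDimensional

section EdgeInnerMap

variable {k : ℕ}

def edgeInnerMap (k : ℕ) : (Fin (k + 1) → E) →ₗ[ℝ] E →L[ℝ] EuclideanSpace ℝ (Fin k) where
  toFun p := (EuclideanSpace.equiv (Fin k) ℝ).symm.toContinuousLinearMap ∘L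
    ContinuousLinearMap.pi fun j => innerSL ℝ (p j.castSucc - p (Fin.last k))
  map_add' p q := by
    ext v j
    simp
    ring
  map_smul' c p := by
    ext v j
    simp [← smul_sub]

@[simp]
theorem edgeInnerMap_apply (p : Fin (k + 1) → E) (v : E) (j : Fin k) :
    edgeInnerMap k p v j = ⟪p j.castSucc - p (Fin.last k), v⟫ :=
  rfl

theorem edgeInnerMap_surjective {p : Fin (k + 1) → E} (hp : AffineIndependent ℝ p) :
    Function.Surjective (edgeInnerMap k p) := by
  have hli : LinearIndependent ℝ fun j : Fin k => p j.castSucc - p (Fin.last k) := by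
    have h := (affineIndependent_iff_linearIndependent_vsub ℝ p (Fin.last k)).mp hp
    let e : Fin k → {i // i ≠ Fin.last k} := fun j => ⟨j.castSucc, (Fin.castSucc_lt_last j).ne⟩
    exact h.comp e fun _ _ hab => Fin.castSucc_injective k (congrArg Subtype.val hab)
  set A := edgeInnerMap k p
  suffices (LinearMap.range (A : E →ₗ[ℝ] EuclideanSpace ℝ (Fin k)))ᗮ = ⊥ from
    LinearMap.range_eq_top.mp (Submodule.orthogonal_eq_bot_iff.mp this)
  refine (Submodule.eq_bot_iff _).mpr fun c hc => ?_
  have hw : ∑ j, c j • (p j.castSucc - p (Fin.last k)) = 0 := by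
    refine ext_inner_right ℝ fun v => ?_
    have := Submodule.inner_right_of_mem_orthogonal (LinearMap.mem_range_self _ v) hc
    simpa [sum_inner, real_inner_smul_left, PiLp.inner_apply, mul_comm, A] using this
  ext j
  exact Fintype.linearIndependent_iff.mp hli c hw j

end EdgeInnerMap

theorem fderiv_mem_edgeInnerMap_image [FiniteDimensional ℝ E] {k : ℕ}
    {u : Fin (k + 1) → E → ℝ} {Ω : Fin (k + 1) → Set E}
    (hconv : ∀ i, ConvexOn ℝ univ (u i)) (hcomp : ∀ i, IsCompact (Ω i))
    (hgrad : ∀ i x, DifferentiableAt ℝ (u i) x → gradient (u i) x ∈ Ω i)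
    {F : E → EuclideanSpace ℝ (Fin k)} (hF : ∀ x j, F x j = u j.castSucc x - u (Fin.last k) x)
    {x : E} (hd : DifferentiableAt ℝ F x) :
    fderiv ℝ F x ∈ edgeInnerMap k '' univ.pi fun i => convexHull ℝ (Ω i) := by
  have hhull : ∀ i, subdifferential (u i) x ⊆ convexHull ℝ (Ω i) := fun i =>
    (hconv i).subdifferential_subset_convexHull (hcomp i) (hgrad i) x
  obtain ⟨q, -, hq⟩ := (hconv (Fin.last k)).exists_mem_inter_subdifferential
    (hcomp _) (hgrad _) x
  set r : Fin k → E := fun j =>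
    (InnerProductSpace.toDual ℝ E).symm ((EuclideanSpace.proj j).comp (fderiv ℝ F x))
  have hr : ∀ j, HasGradientAt (u j.castSucc - u (Fin.last k)) (r j) x := fun j => by
    have hFj : u j.castSucc - u (Fin.last k) = fun y => F y j := funext fun y => (hF y j).symm
    rw [hFj, hasGradientAt_iff_hasFDerivAt, LinearIsometryEquiv.apply_symm_apply]
    exact (EuclideanSpace.proj j).hasFDerivAt.comp x hd.hasFDerivAt
  refine ⟨Fin.lastCases q fun j => r j + q, fun i _ => ?_, ?_⟩
  · induction i using Fin.lastCases with
    | last => simpa using hhull _ hq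
    | cast j => simpa using hhull _ ((hconv _).add_mem_subdifferential hq (hr j))
  · ext v j
    simp [r, InnerProductSpace.toDual_symm_apply]

theorem clarkeJacobian_subset {n k : ℕ}
    {F : EuclideanSpace ℝ (Fin n) → EuclideanSpace ℝ (Fin k)} {x₀ : EuclideanSpace ℝ (Fin n)}
    {S : Set (EuclideanSpace ℝ (Fin n) →L[ℝ] EuclideanSpace ℝ (Fin k))}
    (hSc : Convex ℝ S) (hS : IsClosed S)
    (hF : ∀ x, DifferentiableAt ℝ F x → fderiv ℝ F x ∈ S) : clarkeJacobian F x₀ ⊆ S :=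
  closure_minimal (convexHull_min (fun _ ⟨_, hd, _, hA⟩ =>
    hS.mem_of_tendsto hA (Eventually.of_forall fun m => hF _ (hd m))) hSc) hS

theorem clarke_jacobian_full_rank_general (n K k : ℕ)
    (u : Fin K → EuclideanSpace ℝ (Fin n) → ℝ)
    (Ω : Fin K → Set (EuclideanSpace ℝ (Fin n)))
    (hconv : ∀ i, ConvexOn ℝ univ (u i))
    (hcomp : ∀ i, IsCompact (Ω i))
    (hgrad : ∀ i x, DifferentiableAt ℝ (u i) x → gradient (u i) x ∈ Ω i)
    (ι : Fin (k + 1) → Fin K)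
    (hai : ∀ p : Fin (k + 1) → EuclideanSpace ℝ (Fin n),
      (∀ j, p j ∈ convexHull ℝ (Ω (ι j))) → AffineIndependent ℝ p)
    (F : EuclideanSpace ℝ (Fin n) → EuclideanSpace ℝ (Fin k))
    (hF : ∀ x j, F x j = u (ι j.castSucc) x - u (ι (Fin.last k)) x)
    (x₀ : EuclideanSpace ℝ (Fin n)) :
    ∀ A ∈ clarkeJacobian F x₀, Function.Surjective A := by
  intro A hA
  set P := univ.pi fun j => convexHull ℝ (Ω (ι j))
  have hP : IsCompact P := isCompact_univ_pi fun j => (hcomp _).convexHull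
  have hsub : clarkeJacobian F x₀ ⊆ edgeInnerMap k '' P :=
    clarkeJacobian_subset ((convex_pi fun j _ => convex_convexHull ℝ _).linear_image _)
      (hP.image (edgeInnerMap k).continuous_of_finiteDimensional).isClosed
      fun _ hd => fderiv_mem_edgeInnerMap_image (u := fun j => u (ι j))
        (fun _ => hconv _) (fun _ => hcomp _) (fun _ => hgrad _) hF hd
  obtain ⟨p, hp, rfl⟩ := hsub hA
  exact edgeInnerMap_surjective (hai p fun j => hp j (mem_univ j))

/-- If the gradients of the convex functions `u i` take values in disjoint compact sets
`Ω̄ i` whose convex hulls (along the chosen indices `ι`) are affinely independent, then at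
any point of the coincidence set of the chosen pieces, every element of the Clarke
generalized Jacobian of `F = (u_{ι 0} − u_{ι last}, …, u_{ι (k−1)} − u_{ι last})` has full
rank `k`, i.e. is surjective. -/
theorem clarke_jacobian_full_rank (n K k : ℕ)
    (u : Fin K → EuclideanSpace ℝ (Fin n) → ℝ)
    (Ω : Fin K → Set (EuclideanSpace ℝ (Fin n)))
    (hconv : ∀ i, ConvexOn ℝ univ (u i))
    (hcomp : ∀ i, IsCompact (Ω i))
    (hdisj : Pairwise (Function.onFun Disjoint Ω))
    (hgrad : ∀ i x, DifferentiableAt ℝ (u i) x → gradient (u i) x ∈ Ω i)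
    (ι : Fin (k + 1) → Fin K) (hι : Function.Injective ι)
    (hai : ∀ p : Fin (k + 1) → EuclideanSpace ℝ (Fin n),
      (∀ j, p j ∈ convexHull ℝ (Ω (ι j))) → AffineIndependent ℝ p)
    (F : EuclideanSpace ℝ (Fin n) → EuclideanSpace ℝ (Fin k))
    (hF : ∀ x j, F x j = u (ι j.castSucc) x - u (ι (Fin.last k)) x)
    (x₀ : EuclideanSpace ℝ (Fin n))
    (hx₀ : ∀ j j' : Fin (k + 1), u (ι j) x₀ = u (ι j') x₀) :
    ∀ A ∈ clarkeJacobian F x₀, Function.Surjective A :=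
  clarke_jacobian_full_rank_general n K k u Ω hconv hcomp hgrad ι hai F hF x₀
end
end

section
/- Let u be a convex function on ℝⁿ whose subdifferential image ∂u(ℝⁿ) is bounded, with ∇u(x) ∈ Ω̄₁ ∪ Ω̄₂ for every differentiability point x, where Ω̄₁ and Ω̄₂ are compact sets strongly separated by a hyperplane Π. Then the 'tear set' Σ := {x : ∂u(x) ∩ Ω̄₁ ≠ ∅ and ∂u(x) ∩ Ω̄₂ ≠ ∅} has Hausdorff dimension at most n − 1; in fact it is contained in the graph of a Lipschitz function over Π, hence is (n−1)-rectifiable with locally finite H^{n−1} measure. -/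
/-!
Let `p ∈ ∂u(x) ∩ Ω₂`, `q ∈ ∂u(y) ∩ Ω₁` and `Ω₁ ∪ Ω₂ ⊆ closedBall 0 M`. Monotonicity of the
subdifferential, `⟪p - q, x - y⟫ ≥ 0`, splits into the last coordinate, where `p - q ≥ 2d`,
and the first `n`, where `‖p' - q'‖ ≤ 2M`; hence `y_{n+1} - x_{n+1} ≤ (M / d) ‖x' - y'‖`.
Applied in both orders, this makes the tear set an `(M / d)`-Lipschitz graph over its projection
to the hyperplane. McShane's extension turns it into a subset of the image of `ℝⁿ` under a
Lipschitz map, which has dimension at most `n` and locally finite `μH[n]`.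
-/

open Set

noncomputable section

open MeasureTheory

open scoped NNReal ENNReal

namespace TearSet

variable {n : ℕ}

@[simp]
lemma snocPt_castSucc (x' : EuclideanSpace ℝ (Fin n)) (t : ℝ) (j : Fin n) :
    snocPt x' t j.castSucc = x' j :=
  Fin.snoc_castSucc (α := fun _ => ℝ) _ _ _

@[simp]
lemma snocPt_last (x' : EuclideanSpace ℝ (Fin n)) (t : ℝ) :
    snocPt x' t (Fin.last n) = t :=
  Fin.snoc_last (α := fun _ => ℝ) _ _

@[simp]
lemma projPt_apply (x : EuclideanSpace ℝ (Fin (n + 1))) (i : Fin n) :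
    projPt x i = x i.castSucc := rfl

@[simp]
lemma projPt_snocPt (x' : EuclideanSpace ℝ (Fin n)) (t : ℝ) : projPt (snocPt x' t) = x' := by
  ext i
  simp only [projPt_apply, snocPt_castSucc]

lemma snocPt_projPt (x : EuclideanSpace ℝ (Fin (n + 1))) :
    snocPt (projPt x) (x (Fin.last n)) = x := by
  ext i
  induction i using Fin.lastCases <;> simp

lemma projPt_sub (x y : EuclideanSpace ℝ (Fin (n + 1))) :
    projPt (x - y) = projPt x - projPt y := rfl

lemma snocPt_sub (x' y' : EuclideanSpace ℝ (Fin n)) (s t : ℝ) :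
    snocPt x' s - snocPt y' t = snocPt (x' - y') (s - t) := by
  ext i
  induction i using Fin.lastCases <;> simp

lemma inner_eq_inner_projPt_add (x y : EuclideanSpace ℝ (Fin (n + 1))) :
    inner ℝ x y = inner ℝ (projPt x) (projPt y) + x (Fin.last n) * y (Fin.last n) := by
  simp only [PiLp.inner_apply, RCLike.inner_apply', conj_trivial, projPt_apply,
    Fin.sum_univ_castSucc]

lemma norm_sq_eq_norm_projPt_sq_add (x : EuclideanSpace ℝ (Fin (n + 1))) :
    ‖x‖ ^ 2 = ‖projPt x‖ ^ 2 + x (Fin.last n) ^ 2 := by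
  rw [← real_inner_self_eq_norm_sq, ← real_inner_self_eq_norm_sq, inner_eq_inner_projPt_add, sq]

lemma norm_projPt_le (x : EuclideanSpace ℝ (Fin (n + 1))) : ‖projPt x‖ ≤ ‖x‖ := by
  refine (sq_le_sq₀ (norm_nonneg _) (norm_nonneg _)).mp ?_
  rw [norm_sq_eq_norm_projPt_sq_add x]
  exact le_add_of_nonneg_right (sq_nonneg _)

lemma norm_snocPt_le (x' : EuclideanSpace ℝ (Fin n)) (t : ℝ) :
    ‖snocPt x' t‖ ≤ ‖x'‖ + |t| := by
  refine (sq_le_sq₀ (norm_nonneg _) (by positivity)).mp ?_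
  rw [norm_sq_eq_norm_projPt_sq_add, projPt_snocPt, snocPt_last, add_sq, sq_abs]
  nlinarith [norm_nonneg x', abs_nonneg t]

lemma inner_sub_nonneg_of_mem_subdiff {u : EuclideanSpace ℝ (Fin n) → ℝ}
    {x y p q : EuclideanSpace ℝ (Fin n)} (hp : p ∈ subdiff u x) (hq : q ∈ subdiff u y) :
    0 ≤ inner ℝ (p - q) (x - y) := by
  have hpy := hp y
  have hqx := hq x
  rw [← neg_sub x y, inner_neg_right] at hpy
  rw [inner_sub_left]
  linarith

lemma last_sub_le_of_inner_sub_nonneg {x y p q : EuclideanSpace ℝ (Fin (n + 1))} {L δ : ℝ}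
    (hmono : 0 ≤ inner ℝ (p - q) (x - y)) (hL : ‖projPt p - projPt q‖ ≤ L) (hδ : 0 < δ)
    (hpq : δ ≤ p (Fin.last n) - q (Fin.last n)) :
    y (Fin.last n) - x (Fin.last n) ≤ L / δ * ‖projPt x - projPt y‖ := by
  rw [inner_eq_inner_projPt_add, projPt_sub, projPt_sub] at hmono
  have hinner : inner ℝ (projPt p - projPt q) (projPt x - projPt y) ≤
      L * ‖projPt x - projPt y‖ :=
    (real_inner_le_norm _ _).trans (by gcongr)
  have hL₀ : 0 ≤ L := (norm_nonneg _).trans hL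
  rw [div_mul_eq_mul_div, le_div_iff₀ hδ]
  rcases le_or_gt (y (Fin.last n)) (x (Fin.last n)) with hyx | hxy
  · nlinarith [mul_nonneg hL₀ (norm_nonneg (projPt x - projPt y))]
  · simp only [PiLp.sub_apply] at hmono
    nlinarith

lemma last_sub_le_of_mem_subdiff {u : EuclideanSpace ℝ (Fin (n + 1)) → ℝ}
    {Ω₁ Ω₂ : Set (EuclideanSpace ℝ (Fin (n + 1)))} {a d M : ℝ} (hd : 0 < d)
    (hM : ∀ p ∈ Ω₁ ∪ Ω₂, ‖p‖ ≤ M)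
    (hsep₁ : ∀ p ∈ Ω₁, p (Fin.last n) < a - d) (hsep₂ : ∀ p ∈ Ω₂, a + d < p (Fin.last n))
    {x y : EuclideanSpace ℝ (Fin (n + 1))}
    (hx : (subdiff u x ∩ Ω₂).Nonempty) (hy : (subdiff u y ∩ Ω₁).Nonempty) :
    y (Fin.last n) - x (Fin.last n) ≤ M / d * ‖projPt x - projPt y‖ := by
  obtain ⟨p, hpx, hpΩ⟩ := hx
  obtain ⟨q, hqy, hqΩ⟩ := hy
  have hL : ‖projPt p - projPt q‖ ≤ 2 * M :=
    calc ‖projPt p - projPt q‖ ≤ ‖p‖ + ‖q‖ :=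
          (norm_sub_le _ _).trans (add_le_add (norm_projPt_le p) (norm_projPt_le q))
      _ ≤ 2 * M := by linarith [hM p (.inr hpΩ), hM q (.inl hqΩ)]
  have hδ : 2 * d ≤ p (Fin.last n) - q (Fin.last n) := by
    linarith [hsep₁ q hqΩ, hsep₂ p hpΩ]
  have := last_sub_le_of_inner_sub_nonneg (inner_sub_nonneg_of_mem_subdiff hpx hqy) hL
    (by positivity) hδ
  rwa [mul_div_mul_left _ _ two_ne_zero] at this

lemma exists_lipschitzWith_graph_of_abs_last_sub_le {S : Set (EuclideanSpace ℝ (Fin (n + 1)))}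
    {K : ℝ≥0}
    (hS : ∀ x ∈ S, ∀ y ∈ S, |x (Fin.last n) - y (Fin.last n)| ≤ K * ‖projPt x - projPt y‖) :
    ∃ h : EuclideanSpace ℝ (Fin n) → ℝ, LipschitzWith K h ∧
      S ⊆ {x | x (Fin.last n) = h (projPt x)} := by
  set lift := Function.invFunOn projPt S
  have hlift : ∀ x ∈ S, lift (projPt x) ∈ S ∧ projPt (lift (projPt x)) = projPt x :=
    fun x hx => Function.invFunOn_pos ⟨x, hx, rfl⟩
  have hfiber : ∀ x ∈ S, x (Fin.last n) = lift (projPt x) (Fin.last n) := fun x hx => by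
    have := hS x hx _ (hlift x hx).1
    rwa [(hlift x hx).2, sub_self, norm_zero, mul_zero, abs_nonpos_iff, sub_eq_zero] at this
  have hlip : LipschitzOnWith K (fun x' => lift x' (Fin.last n)) (projPt '' S) := by
    rw [lipschitzOnWith_iff_dist_le_mul]
    rintro _ ⟨x, hx, rfl⟩ _ ⟨y, hy, rfl⟩
    rw [Real.dist_eq, dist_eq_norm, ← hfiber x hx, ← hfiber y hy]
    exact hS x hx y hy
  obtain ⟨h, hh, hext⟩ := hlip.extend_real
  exact ⟨h, hh, fun x hx => (hfiber x hx).trans (hext ⟨x, hx, rfl⟩)⟩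

lemma hausdorffMeasure_closedBall_lt_top (R : ℝ) :
    μH[(n : ℝ)] (Metric.closedBall (0 : EuclideanSpace ℝ (Fin n)) R) < ⊤ := by
  have := isAddHaarMeasure_hausdorffMeasure (E := EuclideanSpace ℝ (Fin n))
  rw [finrank_euclideanSpace_fin] at this
  exact (isCompact_closedBall _ _).measure_lt_top

section LipschitzGraph

variable {h : EuclideanSpace ℝ (Fin n) → ℝ} {K : ℝ≥0}

lemma lipschitzWith_snocPt_graph (hh : LipschitzWith K h) :
    LipschitzWith (1 + K) fun x' => snocPt x' (h x') := by
  refine LipschitzWith.of_dist_le_mul fun x' y' => ?_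
  rw [dist_eq_norm, snocPt_sub, dist_eq_norm]
  refine (norm_snocPt_le _ _).trans ?_
  have := hh.dist_le_mul x' y'
  rw [Real.dist_eq, dist_eq_norm] at this
  push_cast
  linarith

lemma snocPt_graph_projPt {S : Set (EuclideanSpace ℝ (Fin (n + 1)))}
    (hS : S ⊆ {x | x (Fin.last n) = h (projPt x)}) {x : EuclideanSpace ℝ (Fin (n + 1))}
    (hx : x ∈ S) : snocPt (projPt x) (h (projPt x)) = x := by
  rw [← hS hx, snocPt_projPt]

lemma subset_image_snocPt_graph {S : Set (EuclideanSpace ℝ (Fin (n + 1)))}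
    (hS : S ⊆ {x | x (Fin.last n) = h (projPt x)}) (R : ℝ) :
    S ∩ Metric.closedBall 0 R ⊆ (fun x' => snocPt x' (h x')) '' Metric.closedBall 0 R := by
  rintro x ⟨hxS, hxR⟩
  refine ⟨projPt x, ?_, ?_⟩
  · rw [mem_closedBall_zero_iff] at hxR ⊢
    exact (norm_projPt_le x).trans hxR
  · exact snocPt_graph_projPt hS hxS

lemma dimH_le_of_subset_graph (hh : LipschitzWith K h) {S : Set (EuclideanSpace ℝ (Fin (n + 1)))}
    (hS : S ⊆ {x | x (Fin.last n) = h (projPt x)}) :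
    dimH S ≤ n :=
  calc dimH S ≤ dimH (range fun x' => snocPt x' (h x')) :=
        dimH_mono fun x hx => ⟨projPt x, snocPt_graph_projPt hS hx⟩
    _ ≤ dimH (univ : Set (EuclideanSpace ℝ (Fin n))) :=
        (lipschitzWith_snocPt_graph hh).dimH_range_le
    _ = n := by rw [Real.dimH_univ_eq_finrank, finrank_euclideanSpace_fin]

lemma hausdorffMeasure_inter_closedBall_lt_top_of_subset_graph (hh : LipschitzWith K h)
    {S : Set (EuclideanSpace ℝ (Fin (n + 1)))} (hS : S ⊆ {x | x (Fin.last n) = h (projPt x)})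
    (R : ℝ) : μH[(n : ℝ)] (S ∩ Metric.closedBall 0 R) < ⊤ :=
  calc μH[(n : ℝ)] (S ∩ Metric.closedBall 0 R)
      ≤ μH[(n : ℝ)] ((fun x' => snocPt x' (h x')) '' Metric.closedBall 0 R) :=
        measure_mono (subset_image_snocPt_graph hS R)
    _ ≤ ((1 + K : ℝ≥0) : ℝ≥0∞) ^ (n : ℝ) * μH[(n : ℝ)] (Metric.closedBall 0 R) :=
        (lipschitzWith_snocPt_graph hh).hausdorffMeasure_image_le (Nat.cast_nonneg n) _
    _ < ⊤ := ENNReal.mul_lt_top (by simp) (hausdorffMeasure_closedBall_lt_top R)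

end LipschitzGraph

end TearSet

open TearSet in
theorem tear_set_dimension_general (n : ℕ)
    (u : EuclideanSpace ℝ (Fin (n + 1)) → ℝ)
    (Ω₁ Ω₂ : Set (EuclideanSpace ℝ (Fin (n + 1))))
    (hΩ₁ : IsCompact Ω₁) (hΩ₂ : IsCompact Ω₂)
    (a d : ℝ) (hd : 0 < d)
    (hsep₁ : ∀ p ∈ Ω₁, p (Fin.last n) < a - d)
    (hsep₂ : ∀ p ∈ Ω₂, a + d < p (Fin.last n))
    (Sig : Set (EuclideanSpace ℝ (Fin (n + 1))))
    (hSig : Sig = {x | (subdiff u x ∩ Ω₁).Nonempty ∧ (subdiff u x ∩ Ω₂).Nonempty}) :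
    dimH Sig ≤ n ∧
    (∃ (h : EuclideanSpace ℝ (Fin n) → ℝ) (C : NNReal), LipschitzWith C h ∧
      Sig ⊆ {x | x (Fin.last n) = h (projPt x)}) ∧
    ∀ R : ℝ, μH[(n : ℝ)] (Sig ∩ Metric.closedBall 0 R) < ⊤ := by
  obtain ⟨M, hM₀, hM⟩ := (hΩ₁.union hΩ₂).isBounded.exists_pos_norm_le
  have hlip : ∀ x ∈ Sig, ∀ y ∈ Sig, |x (Fin.last n) - y (Fin.last n)| ≤
      (⟨M / d, by positivity⟩ : ℝ≥0) * ‖projPt x - projPt y‖ := by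
    rw [hSig]
    rintro x ⟨hx₁, hx₂⟩ y ⟨hy₁, hy₂⟩
    refine abs_sub_le_iff.mpr ⟨?_, last_sub_le_of_mem_subdiff hd hM hsep₁ hsep₂ hx₂ hy₁⟩
    rw [norm_sub_rev]
    exact last_sub_le_of_mem_subdiff hd hM hsep₁ hsep₂ hy₂ hx₁
  obtain ⟨h, hh, hgraph⟩ := exists_lipschitzWith_graph_of_abs_last_sub_le hlip
  exact ⟨dimH_le_of_subset_graph hh hgraph, ⟨h, _, hh, hgraph⟩,
    hausdorffMeasure_inter_closedBall_lt_top_of_subset_graph hh hgraph⟩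

/-- The tear set of an optimal potential whose gradient takes values in two compact sets
strongly separated by the coordinate hyperplane `{xⁿ⁺¹ = a}` is contained in a Lipschitz
graph over the hyperplane; hence it has Hausdorff dimension at most `n` (codimension one in
`ℝⁿ⁺¹`) and locally finite `n`-dimensional Hausdorff measure. -/
theorem tear_set_dimension (n : ℕ)
    (u : EuclideanSpace ℝ (Fin (n + 1)) → ℝ) (hu : ConvexOn ℝ univ u)
    (hbdd : Bornology.IsBounded (⋃ x, subdiff u x))
    (Ω₁ Ω₂ : Set (EuclideanSpace ℝ (Fin (n + 1))))
    (hΩ₁ : IsCompact Ω₁) (hΩ₂ : IsCompact Ω₂)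
    (hgrad : ∀ x, DifferentiableAt ℝ u x → gradient u x ∈ Ω₁ ∪ Ω₂)
    (a d : ℝ) (hd : 0 < d)
    (hsep₁ : ∀ p ∈ Ω₁, p (Fin.last n) < a - d)
    (hsep₂ : ∀ p ∈ Ω₂, a + d < p (Fin.last n))
    (Sig : Set (EuclideanSpace ℝ (Fin (n + 1))))
    (hSig : Sig = {x | (subdiff u x ∩ Ω₁).Nonempty ∧ (subdiff u x ∩ Ω₂).Nonempty}) :
    dimH Sig ≤ n ∧
    (∃ (h : EuclideanSpace ℝ (Fin n) → ℝ) (C : NNReal), LipschitzWith C h ∧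
      Sig ⊆ {x | x (Fin.last n) = h (projPt x)}) ∧
    ∀ R : ℝ, μH[(n : ℝ)] (Sig ∩ Metric.closedBall 0 R) < ⊤ :=
  tear_set_dimension_general n u Ω₁ Ω₂ hΩ₁ hΩ₂ a d hd hsep₁ hsep₂ Sig hSig
end
end

section
/- Let u = max{u₁, u₂} with u₁, u₂ ∈ C¹(ℝⁿ) convex, ∇u_i(ℝⁿ) ⊂ Ω̄_i where Ω̄₁, Ω̄₂ are disjoint compact sets, and suppose {ch(Ω̄₁), ch(Ω̄₂)} are disjoint (i.e. the two-element collection is affinely independent). Then the coincidence set Σ := {u₁ = u₂} is a C¹ hypersurface in ℝⁿ: at every point x ∈ Σ, ∇u₁(x) ≠ ∇u₂(x), so the implicit function theorem applies to u₁ − u₂. -/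
open Set

/-! Since `∇u_i` takes values in `Ω_i` and the two sets are disjoint, `∇(u₁ - u₂)` never
vanishes, so `u₁ - u₂` is a single global `C¹` defining function for `{u₁ = u₂}`. -/

section Gradient

variable {E : Type*} [NormedAddCommGroup E] [InnerProductSpace ℝ E] [CompleteSpace E]

theorem gradient_ne_of_disjoint {f g : E → ℝ} {s t : Set E} (hst : Disjoint s t)
    (hf : ∀ x, gradient f x ∈ s) (hg : ∀ x, gradient g x ∈ t) (x : E) :
    gradient f x ≠ gradient g x := fun h =>
  disjoint_left.1 hst (hf x) (h ▸ hg x)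

theorem fderiv_sub_ne_zero_of_gradient_ne {f g : E → ℝ} {x : E}
    (hf : DifferentiableAt ℝ f x) (hg : DifferentiableAt ℝ g x)
    (h : gradient f x ≠ gradient g x) : fderiv ℝ (fun y => f y - g y) x ≠ 0 := by
  rw [fderiv_fun_sub hf hg, sub_ne_zero]
  exact fun h' => h (congrArg (InnerProductSpace.toDual ℝ E).symm h')

end Gradient

theorem tear_is_C1_hypersurface_general (n : ℕ)
    (u₁ u₂ : EuclideanSpace ℝ (Fin n) → ℝ)
    (hC₁ : ContDiff ℝ 1 u₁) (hC₂ : ContDiff ℝ 1 u₂)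
    (Ω₁ Ω₂ : Set (EuclideanSpace ℝ (Fin n)))
    (hgrad₁ : ∀ x, gradient u₁ x ∈ Ω₁) (hgrad₂ : ∀ x, gradient u₂ x ∈ Ω₂)
    (hdisj : Disjoint (convexHull ℝ Ω₁) (convexHull ℝ Ω₂)) :
    ∀ x ∈ {x | u₁ x = u₂ x},
      gradient u₁ x ≠ gradient u₂ x ∧
      ∃ (U : Set (EuclideanSpace ℝ (Fin n))) (f : EuclideanSpace ℝ (Fin n) → ℝ),
        IsOpen U ∧ x ∈ U ∧ ContDiffOn ℝ 1 f U ∧ (∀ y ∈ U, fderiv ℝ f y ≠ 0) ∧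
        {x | u₁ x = u₂ x} ∩ U = {y ∈ U | f y = 0} := by
  have hne : ∀ y, gradient u₁ y ≠ gradient u₂ y :=
    gradient_ne_of_disjoint (hdisj.mono (subset_convexHull ℝ Ω₁) (subset_convexHull ℝ Ω₂))
      hgrad₁ hgrad₂
  intro x _
  refine ⟨hne x, univ, fun y => u₁ y - u₂ y, isOpen_univ, mem_univ x,
    (hC₁.sub hC₂).contDiffOn, fun y _ => ?_, ?_⟩
  · exact fderiv_sub_ne_zero_of_gradient_ne (hC₁.differentiable one_ne_zero y)
      (hC₂.differentiable one_ne_zero y) (hne y)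
  · ext y
    simp [sub_eq_zero]

/-- Affinely independent (i.e. disjoint) convex hulls of the target pieces yield a `C¹`
hypersurface tear: if `u₁, u₂` are `C¹` convex with gradients valued in disjoint compact
sets whose convex hulls are disjoint, then on the coincidence set `Σ = {u₁ = u₂}` the
gradients differ, and `Σ` is locally the zero set of a `C¹` function with nonvanishing
derivative. -/
theorem tear_is_C1_hypersurface (n : ℕ)
    (u₁ u₂ : EuclideanSpace ℝ (Fin n) → ℝ)
    (hu₁ : ConvexOn ℝ univ u₁) (hu₂ : ConvexOn ℝ univ u₂)
    (hC₁ : ContDiff ℝ 1 u₁) (hC₂ : ContDiff ℝ 1 u₂)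
    (Ω₁ Ω₂ : Set (EuclideanSpace ℝ (Fin n)))
    (hΩ₁ : IsCompact Ω₁) (hΩ₂ : IsCompact Ω₂)
    (hgrad₁ : ∀ x, gradient u₁ x ∈ Ω₁) (hgrad₂ : ∀ x, gradient u₂ x ∈ Ω₂)
    (hdisj : Disjoint (convexHull ℝ Ω₁) (convexHull ℝ Ω₂)) :
    ∀ x ∈ {x | u₁ x = u₂ x},
      gradient u₁ x ≠ gradient u₂ x ∧
      ∃ (U : Set (EuclideanSpace ℝ (Fin n))) (f : EuclideanSpace ℝ (Fin n) → ℝ),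
        IsOpen U ∧ x ∈ U ∧ ContDiffOn ℝ 1 f U ∧ (∀ y ∈ U, fderiv ℝ f y ≠ 0) ∧
        {x | u₁ x = u₂ x} ∩ U = {y ∈ U | f y = 0} :=
  tear_is_C1_hypersurface_general n u₁ u₂ hC₁ hC₂ Ω₁ Ω₂ hgrad₁ hgrad₂ hdisj
end

section
/- Let u₁, u₂ be convex functions finite on ℝⁿ with u := max{u₁, u₂}, such that ∂u₁(ℝⁿ) ⊂ ch(Ω̄₁) and ∂u₂(ℝⁿ) ⊂ ch(Ω̄₂) where Ω̄₁ and Ω̄₂ are compact and strongly separated by a hyperplane. Then the three sets Σ := {x : ∂u(x) ∩ Ω̄₁ ≠ ∅ and ∂u(x) ∩ Ω̄₂ ≠ ∅}, C₁ := {x : ∂u(x) ∩ Ω̄₂ = ∅}, and C₂ := {x : ∂u(x) ∩ Ω̄₁ = ∅} coincide respectively with the sets {u₁ = u₂}, {u₁ > u₂}, and {u₁ < u₂}. -/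
open Set RealInnerProductSpace

noncomputable section

/-!
Where `u₂ x < u₁ x`, the function `u` agrees with `u₁` near `x`, so by convexity every subgradient
of `u` at `x` is a subgradient of `u₁`, hence lies in `ch Ω̄₁`, which misses `Ω̄₂` by the
separation. Where `u₂ x ≤ u₁ x`, every subgradient of `u₁` at `x` is one of `u`, and `∂u₁(x)`
always meets `Ω̄₁`: by Rademacher's theorem `x` is a limit of points of differentiability of `u₁`,
and a limit point of their gradients (in the compact `Ω̄₁`) is a subgradient at `x`. Thus
`∂u(x) ∩ Ω̄₁ ≠ ∅ ↔ u₂ x ≤ u₁ x`, symmetrically for `Ω̄₂`, and the three identities follow.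
-/

open Filter Topology

theorem LocallyLipschitz.dense_differentiableAt {E : Type*} [NormedAddCommGroup E]
    [NormedSpace ℝ E] [FiniteDimensional ℝ E] {f : E → ℝ} (hf : LocallyLipschitz f) :
    Dense {x | DifferentiableAt ℝ f x} := by
  let _ : MeasurableSpace E := borel E
  have _ : BorelSpace E := ⟨rfl⟩
  refine dense_iff_inter_open.2 fun U hU ⟨x, hxU⟩ => ?_
  obtain ⟨K, t, ht, hK⟩ := hf x
  obtain ⟨g, hg, hfg⟩ := hK.extend_real
  have hV : IsOpen (interior t ∩ U) := isOpen_interior.inter hU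
  have hg_dense : Dense {x | DifferentiableAt ℝ g x} :=
    MeasureTheory.Measure.dense_of_ae
      (hg.ae_differentiableAt (μ := (Module.finBasis ℝ E).addHaar))
  obtain ⟨y, ⟨hyt, hyU⟩, hgy⟩ :=
    hg_dense.inter_open_nonempty _ hV ⟨x, mem_interior_iff_mem_nhds.2 ht, hxU⟩
  have hfg_near : f =ᶠ[𝓝 y] g :=
    mem_of_superset (mem_interior_iff_mem_nhds.1 hyt) hfg
  exact ⟨y, hyU, hfg_near.differentiableAt_iff.2 hgy⟩

theorem ConvexOn.add_le_of_hasFDerivAt {E : Type*} [NormedAddCommGroup E] [NormedSpace ℝ E]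
    {f : E → ℝ} {f' : E →L[ℝ] ℝ} {x : E} (hf : ConvexOn ℝ univ f) (hf' : HasFDerivAt f f' x)
    (y : E) : f x + f' (y - x) ≤ f y := by
  set L : ℝ →ᵃ[ℝ] E := AffineMap.lineMap x y
  have hline : ConvexOn ℝ univ (f ∘ L) := by simpa using hf.comp_affineMap L
  have hderiv : HasDerivAt (f ∘ L) (f' (y - x)) 0 := by
    apply HasFDerivAt.comp_hasDerivAt
    · simpa [L] using hf'
    · exact AffineMap.hasDerivAt_lineMap
  have := hline.le_slope_of_hasDerivAt (mem_univ 0) (mem_univ 1) zero_lt_one hderiv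
  rw [slope_def_field] at this
  simp only [Function.comp_apply, L, AffineMap.lineMap_apply_zero, AffineMap.lineMap_apply_one,
    sub_zero, div_one] at this
  linarith

variable {n : ℕ} {f g : EuclideanSpace ℝ (Fin n) → ℝ} {x : EuclideanSpace ℝ (Fin n)}

theorem ConvexOn.gradient_mem_subdiff (hf : ConvexOn ℝ univ f) (h : DifferentiableAt ℝ f x) :
    gradient f x ∈ subdiff f x := fun y => by
  simpa [InnerProductSpace.toDual_apply_apply] using
    hf.add_le_of_hasFDerivAt h.hasGradientAt.hasFDerivAt y

theorem mem_subdiff_of_tendsto {ι : Type*} {l : Filter ι} [l.NeBot] (hf : Continuous f)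
    {y p : ι → EuclideanSpace ℝ (Fin n)} {q : EuclideanSpace ℝ (Fin n)}
    (hy : Tendsto y l (𝓝 x)) (hp : Tendsto p l (𝓝 q)) (hmem : ∀ᶠ k in l, p k ∈ subdiff f (y k)) :
    q ∈ subdiff f x := fun z =>
  le_of_tendsto (((hf.tendsto x).comp hy).add (hp.inner (tendsto_const_nhds.sub hy)))
    (hmem.mono fun _ hk => hk z)

theorem ConvexOn.subdiff_inter_nonempty (hf : ConvexOn ℝ univ f)
    {Ω : Set (EuclideanSpace ℝ (Fin n))} (hΩ : IsCompact Ω)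
    (hgrad : ∀ x, DifferentiableAt ℝ f x → gradient f x ∈ Ω) (x : EuclideanSpace ℝ (Fin n)) :
    (subdiff f x ∩ Ω).Nonempty := by
  obtain ⟨y, hdiff, hy⟩ :=
    mem_closure_iff_seq_limit.1 (hf.locallyLipschitz.dense_differentiableAt.closure_eq ▸ mem_univ x)
  obtain ⟨q, hqΩ, φ, hφ, hq⟩ := hΩ.tendsto_subseq fun k => hgrad _ (hdiff k)
  exact ⟨q, mem_subdiff_of_tendsto hf.locallyLipschitz.continuous (hy.comp hφ.tendsto_atTop) hq
    (Eventually.of_forall fun k => hf.gradient_mem_subdiff (hdiff (φ k))), hqΩ⟩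

theorem subdiff_subset_of_le_of_eq (hle : ∀ y, f y ≤ g y) (heq : f x = g x) :
    subdiff f x ⊆ subdiff g x := fun p hp y => by
  linarith [hp y, hle y]

theorem subdiff_subset_of_eventuallyEq (hg : ConvexOn ℝ univ g) (hfg : f =ᶠ[𝓝 x] g) :
    subdiff f x ⊆ subdiff g x := by
  intro p hp y
  set L : ℝ →ᵃ[ℝ] EuclideanSpace ℝ (Fin n) := AffineMap.lineMap x y
  have hline : Tendsto L (𝓝[>] 0) (𝓝 x) := by
    simpa [L] using (L.continuous_of_finiteDimensional.tendsto 0).mono_left nhdsWithin_le_nhds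
  obtain ⟨t, hfg_t, ht⟩ :=
    ((hline.eventually hfg).and (Ioo_mem_nhdsGT one_pos)).exists
  have hconv : g (L t) ≤ (1 - t) * g x + t * g y := by
    simpa [L, AffineMap.lineMap_apply_module] using
      hg.2 (mem_univ x) (mem_univ y) (by linarith [ht.2]) ht.1.le (by ring)
  have hLt : L t - x = t • (y - x) := by simp [L, AffineMap.lineMap_apply_module']
  have key : t * ⟪p, y - x⟫ ≤ t * (g y - g x) := by
    have hsub := hp (L t)
    rw [hLt, real_inner_smul_right, hfg.eq_of_nhds, hfg_t] at hsub
    linarith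
  linarith [le_of_mul_le_mul_left key ht.1]

theorem subdiff_max_inter_nonempty_iff (hf : ConvexOn ℝ univ f) (hg : ConvexOn ℝ univ g)
    {Ω Ω' : Set (EuclideanSpace ℝ (Fin n))} (hΩ : IsCompact Ω)
    (hgrad : ∀ x, DifferentiableAt ℝ f x → gradient f x ∈ Ω)
    (hsub : ∀ x, subdiff g x ⊆ convexHull ℝ Ω') (hdisj : Disjoint Ω (convexHull ℝ Ω')) :
    (subdiff (fun y => max (f y) (g y)) x ∩ Ω).Nonempty ↔ g x ≤ f x := by
  refine ⟨fun ⟨p, hp, hpΩ⟩ => not_lt.1 fun hlt => ?_, fun hle => ?_⟩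
  · have hnear : (fun y => max (f y) (g y)) =ᶠ[𝓝 x] g :=
      ((hf.locallyLipschitz.continuous.tendsto x).eventually_lt
        (hg.locallyLipschitz.continuous.tendsto x) hlt).mono fun _ h => max_eq_right h.le
    exact hdisj.ne_of_mem hpΩ (hsub x (subdiff_subset_of_eventuallyEq hg hnear hp)) rfl
  · obtain ⟨p, hp, hpΩ⟩ := hf.subdiff_inter_nonempty hΩ hgrad x
    exact ⟨p, subdiff_subset_of_le_of_eq (fun _ => le_max_left _ _) (max_eq_left hle).symm hp, hpΩ⟩

theorem tear_set_characterization_general (n : ℕ)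
    (u₁ u₂ : EuclideanSpace ℝ (Fin n) → ℝ)
    (hu₁ : ConvexOn ℝ univ u₁) (hu₂ : ConvexOn ℝ univ u₂)
    (u : EuclideanSpace ℝ (Fin n) → ℝ) (hu : u = fun x => max (u₁ x) (u₂ x))
    (Ω₁ Ω₂ : Set (EuclideanSpace ℝ (Fin n)))
    (hΩ₁ : IsCompact Ω₁) (hΩ₂ : IsCompact Ω₂)
    (hsub₁ : ∀ x, subdiff u₁ x ⊆ convexHull ℝ Ω₁)
    (hsub₂ : ∀ x, subdiff u₂ x ⊆ convexHull ℝ Ω₂)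
    (hgrad₁ : ∀ x, DifferentiableAt ℝ u₁ x → gradient u₁ x ∈ Ω₁)
    (hgrad₂ : ∀ x, DifferentiableAt ℝ u₂ x → gradient u₂ x ∈ Ω₂)
    (v : EuclideanSpace ℝ (Fin n)) (a d : ℝ) (hd : 0 < d)
    (hsep₁ : ∀ p ∈ convexHull ℝ Ω₁, ⟪p, v⟫ < a - d)
    (hsep₂ : ∀ p ∈ convexHull ℝ Ω₂, a + d < ⟪p, v⟫) :
    {x | (subdiff u x ∩ Ω₁).Nonempty ∧ (subdiff u x ∩ Ω₂).Nonempty} = {x | u₁ x = u₂ x} ∧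
    {x | subdiff u x ∩ Ω₂ = ∅} = {x | u₂ x < u₁ x} ∧
    {x | subdiff u x ∩ Ω₁ = ∅} = {x | u₁ x < u₂ x} := by
  have disj₁ : Disjoint Ω₁ (convexHull ℝ Ω₂) := disjoint_left.2 fun p hp₁ hp₂ => by
    linarith [hsep₁ p (subset_convexHull ℝ Ω₁ hp₁), hsep₂ p hp₂]
  have disj₂ : Disjoint Ω₂ (convexHull ℝ Ω₁) := disjoint_left.2 fun p hp₂ hp₁ => by
    linarith [hsep₁ p hp₁, hsep₂ p (subset_convexHull ℝ Ω₂ hp₂)]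
  have meets₁ : ∀ x, (subdiff u x ∩ Ω₁).Nonempty ↔ u₂ x ≤ u₁ x := fun x => by
    subst hu
    exact subdiff_max_inter_nonempty_iff hu₁ hu₂ hΩ₁ hgrad₁ hsub₂ disj₁
  have meets₂ : ∀ x, (subdiff u x ∩ Ω₂).Nonempty ↔ u₁ x ≤ u₂ x := fun x => by
    rw [hu, funext fun y => max_comm (u₁ y) (u₂ y)]
    exact subdiff_max_inter_nonempty_iff hu₂ hu₁ hΩ₂ hgrad₂ hsub₁ disj₂
  refine ⟨?_, ?_, ?_⟩ <;> ext x <;>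
    simp only [mem_ofPred_eq, ← not_nonempty_iff_eq_empty, meets₁, meets₂, not_le]
  exact and_comm.trans le_antisymm_iff.symm

/-- For `u = max{u₁, u₂}` with subdifferential images in the convex hulls of compact sets
`Ω̄₁, Ω̄₂` strongly separated by a hyperplane, the tear set `Σ = {∂u meets both Ω̄ᵢ}`, and
the sets `C₁ = {∂u ∩ Ω̄₂ = ∅}` and `C₂ = {∂u ∩ Ω̄₁ = ∅}`, coincide with `{u₁ = u₂}`,
`{u₁ > u₂}` and `{u₁ < u₂}` respectively. -/
theorem tear_set_characterization (n : ℕ)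
    (u₁ u₂ : EuclideanSpace ℝ (Fin n) → ℝ)
    (hu₁ : ConvexOn ℝ univ u₁) (hu₂ : ConvexOn ℝ univ u₂)
    (u : EuclideanSpace ℝ (Fin n) → ℝ) (hu : u = fun x => max (u₁ x) (u₂ x))
    (Ω₁ Ω₂ : Set (EuclideanSpace ℝ (Fin n)))
    (hΩ₁ : IsCompact Ω₁) (hΩ₂ : IsCompact Ω₂)
    (hsub₁ : ∀ x, subdiff u₁ x ⊆ convexHull ℝ Ω₁)
    (hsub₂ : ∀ x, subdiff u₂ x ⊆ convexHull ℝ Ω₂)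
    (hgrad₁ : ∀ x, DifferentiableAt ℝ u₁ x → gradient u₁ x ∈ Ω₁)
    (hgrad₂ : ∀ x, DifferentiableAt ℝ u₂ x → gradient u₂ x ∈ Ω₂)
    (v : EuclideanSpace ℝ (Fin n)) (hv : ‖v‖ = 1) (a d : ℝ) (hd : 0 < d)
    (hsep₁ : ∀ p ∈ convexHull ℝ Ω₁, ⟪p, v⟫ < a - d)
    (hsep₂ : ∀ p ∈ convexHull ℝ Ω₂, a + d < ⟪p, v⟫) :
    {x | (subdiff u x ∩ Ω₁).Nonempty ∧ (subdiff u x ∩ Ω₂).Nonempty} = {x | u₁ x = u₂ x} ∧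
    {x | subdiff u x ∩ Ω₂ = ∅} = {x | u₂ x < u₁ x} ∧
    {x | subdiff u x ∩ Ω₁ = ∅} = {x | u₁ x < u₂ x} :=
  tear_set_characterization_general n u₁ u₂ hu₁ hu₂ u hu Ω₁ Ω₂ hΩ₁ hΩ₂ hsub₁ hsub₂ hgrad₁ hgrad₂ v a
    d hd hsep₁ hsep₂
end
end
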